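/- arXiv:2104.13801 — 2 statements merged into one kernel-verified Lean document; each statement's English description precedes it below -/
import Mathlib

section
/- Let l0,l1 ∈ ℝ, s0,s1 > 0, θ ∈ (0,1), and m_θ(x) = (1−θ)·p_{l0,s0}(x) + θ·p_{l1,s1}(x). Then the cross-entropy between p_{l0,s0} and m_θ admits the closed form: −∫_ℝ p_{l0,s0}(x)·log m_θ(x) dx = log(4·π·s0) + log( ((l0−l1)² + (s0+s1)²) / ( (1−θ)·(s0² + s1² + (l0−l1)²) + 2·θ·s0·s1 + 2·√( s0²·s1² + s0·s1·((s0−s1)² + (l0−l1)²)·θ·(1−θ) ) ) ). -/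
open MeasureTheory Real

/-- The Cauchy density with location `l` and scale `s`. -/
noncomputable def cauchyPdf (l s x : ℝ) : ℝ := s / (π * (s ^ 2 + (x - l) ^ 2))

/-!
The central identity is `∫ p_{l,s}(x) log (b² + (x - a)²) dx = log ((s + b)² + (a - l)²)`: for
`z = a - i b` with `b > 0`, `w ↦ log |w - z|²` is harmonic on the upper half-plane, and `p_{l,s}`
is its Poisson kernel at `l + i s`. Instead of complex analysis we differentiate in `b`:
by the convolution identity `∫ p_{l,s} p_{a,b} = p_{l,s+b}(a)`, obtained from an explicit
antiderivative, both sides have the same derivative, and both are `2 log b + o(1)` as `b → ∞`.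

Completing the square writes `(1 - θ) p_{l₀,s₀} + θ p_{l₁,s₁}` as `α ((x - u)² + w²)` divided by
`π (s₀² + (x - l₀)²) (s₁² + (x - l₁)²)`, so the logarithm of the mixture splits into terms of
this form.
-/

open Filter Topology ProbabilityTheory

lemma MeasureTheory.Integrable.mul_of_tendsto_cocompact {f g : ℝ → ℝ} {c : ℝ}
    (hf : Integrable f) (hg : Continuous g) (hgc : Tendsto g (cocompact ℝ) (𝓝 c)) :
    Integrable fun x ↦ f x * g x := by
  let g₀ : ZeroAtInftyContinuousMap ℝ ℝ :=
    ⟨⟨fun x ↦ g x - c, hg.sub continuous_const⟩, by simpa using hgc.sub_const c⟩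
  obtain ⟨C, hC⟩ := g₀.isBounded_range.exists_norm_le
  refine hf.mul_bdd hg.aestronglyMeasurable (c := C + ‖c‖) (ae_of_all _ fun x ↦ ?_)
  calc ‖g x‖ = ‖g₀ x + c‖ := by simp [g₀]
    _ ≤ C + ‖c‖ := (norm_add_le _ _).trans (add_le_add_left (hC _ ⟨x, rfl⟩) _)

lemma tendsto_sq_add_sq_div_sq_add_sq_cocompact (a b c d : ℝ) :
    Tendsto (fun x ↦ (b ^ 2 + (x - a) ^ 2) / (d ^ 2 + (x - c) ^ 2)) (cocompact ℝ) (𝓝 1) := by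
  let g : ℝ → ℝ := fun t ↦ (b ^ 2 * t ^ 2 + (1 - a * t) ^ 2) / (d ^ 2 * t ^ 2 + (1 - c * t) ^ 2)
  have hg : Tendsto g (𝓝 0) (𝓝 1) := by
    have : ContinuousAt g 0 := by unfold g; fun_prop (disch := norm_num)
    simpa [g] using this.tendsto
  have hinv : Tendsto (fun x : ℝ ↦ x⁻¹) (cocompact ℝ) (𝓝 0) :=
    Metric.cobounded_eq_cocompact (α := ℝ) ▸ tendsto_inv₀_cobounded
  refine (hg.comp hinv).congr' ?_
  filter_upwards [(hasBasis_cocompact.mem_iff).2 ⟨{0}, isCompact_singleton, subset_rfl⟩] with x hx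
  have hx : x ≠ 0 := hx
  simp only [g, Function.comp_apply]
  field_simp

lemma tendsto_log_sub_log_cocompact {b d : ℝ} (hb : b ≠ 0) (hd : d ≠ 0) (a c : ℝ) :
    Tendsto (fun x ↦ log (b ^ 2 + (x - a) ^ 2) - log (d ^ 2 + (x - c) ^ 2)) (cocompact ℝ)
      (𝓝 0) := by
  have h := (continuousAt_log one_ne_zero).tendsto.comp
    (tendsto_sq_add_sq_div_sq_add_sq_cocompact a b c d)
  rw [log_one] at h
  exact h.congr fun x ↦ log_div (by positivity) (by positivity)

lemma tendsto_log_add_sq_add_sq_sub_two_log {c : ℝ} (hc : 0 ≤ c) (d : ℝ) :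
    Tendsto (fun t ↦ log ((c + t) ^ 2 + d ^ 2) - 2 * log t) atTop (𝓝 0) := by
  have hg : Tendsto (fun u : ℝ ↦ (c * u + 1) ^ 2 + (d * u) ^ 2) (𝓝 0) (𝓝 1) := by
    have : ContinuousAt (fun u : ℝ ↦ (c * u + 1) ^ 2 + (d * u) ^ 2) 0 := by fun_prop
    simpa using this.tendsto
  have h := ((continuousAt_log one_ne_zero).tendsto.comp hg).comp tendsto_inv_atTop_zero
  rw [log_one] at h
  refine h.congr' <| (eventually_gt_atTop 0).mono fun t ht ↦ ?_
  have hct : 0 < c + t := by linarith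
  have : (c * t⁻¹ + 1) ^ 2 + (d * t⁻¹) ^ 2 = ((c + t) ^ 2 + d ^ 2) / t ^ 2 := by
    field_simp
  simp only [Function.comp_apply, this]
  rw [log_div (by positivity) (by positivity), log_pow]
  push_cast
  ring

lemma hasDerivAt_log_sq_add_sq {b : ℝ} (hb : b ≠ 0) (a x : ℝ) :
    HasDerivAt (fun x ↦ log (b ^ 2 + (x - a) ^ 2)) (2 * (x - a) / (b ^ 2 + (x - a) ^ 2)) x := by
  have h := ((((hasDerivAt_id' x).sub_const a).fun_pow 2).const_add (b ^ 2)).log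
    (by positivity)
  convert h using 1
  ring

lemma eq_zero_of_hasDerivAt_zero_off_countable_of_tendsto {f : ℝ → ℝ} {a : ℝ} {S : Set ℝ}
    (hS : S.Countable) (hc : ContinuousOn f (Set.Ici a))
    (hd : ∀ x ∈ Set.Ioi a \ S, HasDerivAt f 0 x) (hlim : Tendsto f atTop (𝓝 0)) : f a = 0 := by
  have hconst : ∀ T ≥ a, f T = f a := fun T hT ↦ by
    have h := integral_eq_of_hasDerivAt_off_countable_of_le f 0 hT hS
      (hc.mono Set.Icc_subset_Ici_self) (fun x hx ↦ hd x ⟨hx.1.1, hx.2⟩)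
      intervalIntegrable_const
    simp only [Pi.zero_apply, intervalIntegral.integral_zero] at h
    linarith
  exact tendsto_nhds_unique (tendsto_const_nhds.congr' <|
    (eventually_ge_atTop a).mono fun T hT ↦ (hconst T hT).symm) hlim

lemma quadratic_eq_mul_sq_add_sq {α β γ : ℝ} (hα : α ≠ 0) (hD : 0 ≤ α * γ - β ^ 2) (x : ℝ) :
    α * x ^ 2 - 2 * β * x + γ = α * ((√(α * γ - β ^ 2) / α) ^ 2 + (x - β / α) ^ 2) := by
  field_simp
  rw [sq_sqrt hD]
  ring

section Cauchy

variable {l s : ℝ}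

lemma cauchyPdf_eq_cauchyPDFReal (hs : 0 ≤ s) : cauchyPdf l s = cauchyPDFReal l s.toNNReal := by
  ext x
  rw [cauchyPdf, cauchyPDFReal_def, Real.coe_toNNReal _ hs, div_eq_mul_inv, mul_inv]
  ring

lemma cauchyPdf_pos (hs : 0 < s) (x : ℝ) : 0 < cauchyPdf l s x := by
  unfold cauchyPdf
  positivity

lemma cauchyPdf_le_inv (hs : 0 < s) (x : ℝ) : cauchyPdf l s x ≤ (π * s)⁻¹ := by
  unfold cauchyPdf
  rw [div_le_iff₀ (by positivity)]
  field_simp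
  nlinarith [sq_nonneg (x - l)]

@[fun_prop]
lemma measurable_cauchyPdf : Measurable (cauchyPdf l s) := by
  unfold cauchyPdf
  fun_prop

lemma integrable_cauchyPdf (hs : 0 ≤ s) : Integrable (cauchyPdf l s) := by
  rw [cauchyPdf_eq_cauchyPDFReal hs]
  exact integrable_cauchyPDFReal l

lemma integral_cauchyPdf (hs : 0 < s) : ∫ x, cauchyPdf l s x = 1 := by
  rw [cauchyPdf_eq_cauchyPDFReal hs.le]
  exact integral_cauchyPDFReal_eq_one l (by simpa using hs)

lemma hasDerivAt_arctan_sub_div (hs : s ≠ 0) (x : ℝ) :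
    HasDerivAt (fun x ↦ arctan ((x - l) / s)) (π * cauchyPdf l s x) x := by
  refine (((hasDerivAt_id' x).sub_const l).div_const s).arctan.congr_deriv ?_
  unfold cauchyPdf
  field_simp

lemma tendsto_arctan_sub_div_atTop (hs : 0 < s) :
    Tendsto (fun x ↦ arctan ((x - l) / s)) atTop (𝓝 (π / 2)) :=
  tendsto_nhds_of_tendsto_nhdsWithin tendsto_arctan_atTop |>.comp <|
    (tendsto_atTop_add_const_right _ _ tendsto_id).atTop_div_const hs

lemma tendsto_arctan_sub_div_atBot (hs : 0 < s) :
    Tendsto (fun x ↦ arctan ((x - l) / s)) atBot (𝓝 (-(π / 2))) :=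
  tendsto_nhds_of_tendsto_nhdsWithin tendsto_arctan_atBot |>.comp <|
    (tendsto_atBot_add_const_right _ _ tendsto_id).atBot_div_const hs

lemma integrable_cauchyPdf_mul_log_one_add_sq (l : ℝ) :
    Integrable fun x ↦ cauchyPdf l 1 x * log (1 + (x - l) ^ 2) := by
  have hdom : Integrable fun x : ℝ ↦ 4 / π * (1 + (x - l) ^ 2) ^ (-(3 / 4 : ℝ)) := by
    have h := (integrable_rpow_neg_one_add_norm_sq (E := ℝ) (r := 3 / 2)
      (by norm_num)).comp_sub_right (μ := volume) l
    refine (h.const_mul (4 / π)).congr (ae_of_all _ fun x ↦ ?_)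
    norm_num [Real.norm_eq_abs, sq_abs]
  refine hdom.mono' (by fun_prop) (ae_of_all _ fun x ↦ ?_)
  have hp := cauchyPdf_pos one_pos (l := l) x
  have ht : 1 ≤ 1 + (x - l) ^ 2 := le_add_of_nonneg_right (sq_nonneg _)
  have hlog := log_le_rpow_div (x := 1 + (x - l) ^ 2) (by positivity) (ε := 1 / 4) (by norm_num)
  rw [Real.norm_eq_abs, abs_of_nonneg (mul_nonneg hp.le (log_nonneg ht)),
    show -(3 / 4 : ℝ) = 1 / 4 - 1 by norm_num, rpow_sub_one (by positivity)]
  calc cauchyPdf l 1 x * log (1 + (x - l) ^ 2)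
      ≤ cauchyPdf l 1 x * ((1 + (x - l) ^ 2) ^ (1 / 4 : ℝ) / (1 / 4)) :=
        mul_le_mul_of_nonneg_left hlog hp.le
    _ = _ := by unfold cauchyPdf; field_simp

lemma integrable_cauchyPdf_mul_log {b : ℝ} (hs : 0 < s) (hb : b ≠ 0) (a : ℝ) :
    Integrable fun x ↦ cauchyPdf l s x * log (b ^ 2 + (x - a) ^ 2) := by
  have h₁ := (integrable_cauchyPdf_mul_log_one_add_sq l).mul_of_tendsto_cocompact
    (g := fun x ↦ s * ((1 ^ 2 + (x - l) ^ 2) / (s ^ 2 + (x - l) ^ 2)))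
    (continuous_const.mul (Continuous.div (by fun_prop) (by fun_prop) fun x ↦ by positivity))
    (by simpa using (tendsto_sq_add_sq_div_sq_add_sq_cocompact l 1 l s).const_mul s)
  have h₂ := (integrable_cauchyPdf hs.le (l := l)).mul_of_tendsto_cocompact
    (g := fun x ↦ log (b ^ 2 + (x - a) ^ 2) - log (1 ^ 2 + (x - l) ^ 2))
    ((Continuous.log (by fun_prop) fun x ↦ by positivity).sub
      (Continuous.log (by fun_prop) fun x ↦ by positivity))
    (tendsto_log_sub_log_cocompact hb one_ne_zero a l)
  refine (h₁.add h₂).congr (ae_of_all _ fun x ↦ ?_)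
  simp only [Pi.add_apply, cauchyPdf, one_pow]
  field_simp
  ring

lemma integral_cauchyPdf_mul_cauchyPdf {a b : ℝ} (hs : 0 < s) (hb : 0 < b)
    (hne : (a, b) ≠ (l, s)) :
    ∫ x, cauchyPdf l s x * cauchyPdf a b x = cauchyPdf l (s + b) a := by
  set u := a - l with hu
  have hΔ₂ : 0 < u ^ 2 + (s - b) ^ 2 := by
    by_contra! h
    exact hne (Prod.ext (by nlinarith [sq_nonneg u, sq_nonneg (s - b)])
      (by nlinarith [sq_nonneg u, sq_nonneg (s - b)]))
  set Δ := (u ^ 2 + (s + b) ^ 2) * (u ^ 2 + (s - b) ^ 2) with hΔdef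
  have hΔ : 0 < Δ := by positivity
  -- partial fractions of `1 / ((s² + (x - l)²) (b² + (x - a)²))`
  set c₁ := s * b * u / (π ^ 2 * Δ)
  set c₂ := b * (b ^ 2 - s ^ 2 + u ^ 2) / (π ^ 2 * Δ)
  set c₃ := s * (s ^ 2 - b ^ 2 + u ^ 2) / (π ^ 2 * Δ)
  let H x := c₁ * (log (s ^ 2 + (x - l) ^ 2) - log (b ^ 2 + (x - a) ^ 2)) +
    c₂ * arctan ((x - l) / s) + c₃ * arctan ((x - a) / b)
  have hH : ∀ x, HasDerivAt H (cauchyPdf l s x * cauchyPdf a b x) x := fun x ↦ by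
    refine ((((hasDerivAt_log_sq_add_sq hs.ne' l x).sub
      (hasDerivAt_log_sq_add_sq hb.ne' a x)).const_mul c₁).add
      ((hasDerivAt_arctan_sub_div hs.ne' x).const_mul c₂) |>.add
      ((hasDerivAt_arctan_sub_div hb.ne' x).const_mul c₃)).congr_deriv ?_
    have h₁ : 0 < s ^ 2 + (x - l) ^ 2 := by positivity
    have h₂ : 0 < b ^ 2 + (x - a) ^ 2 := by positivity
    simp only [cauchyPdf, c₁, c₂, c₃]
    field_simp
    ring
  have hlog := tendsto_log_sub_log_cocompact hs.ne' hb.ne' l a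
  have htop := (((hlog.mono_left atTop_le_cocompact).const_mul c₁).add
    ((tendsto_arctan_sub_div_atTop hs (l := l)).const_mul c₂)).add
    ((tendsto_arctan_sub_div_atTop hb (l := a)).const_mul c₃)
  have hbot := (((hlog.mono_left atBot_le_cocompact).const_mul c₁).add
    ((tendsto_arctan_sub_div_atBot hs (l := l)).const_mul c₂)).add
    ((tendsto_arctan_sub_div_atBot hb (l := a)).const_mul c₃)
  have hint : Integrable fun x ↦ cauchyPdf l s x * cauchyPdf a b x :=
    (integrable_cauchyPdf hs.le).mul_bdd (by fun_prop) (ae_of_all _ fun x ↦ by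
      rw [Real.norm_eq_abs, abs_of_pos (cauchyPdf_pos hb x)]
      exact cauchyPdf_le_inv hb x)
  rw [integral_of_hasDerivAt_of_tendsto hH hint hbot htop]
  simp only [cauchyPdf, c₂, c₃, hΔdef, ← hu]
  field_simp
  ring

lemma hasDerivAt_integral_cauchyPdf_mul_log {b : ℝ} (hs : 0 < s) (hb : 0 < b) (a : ℝ) :
    HasDerivAt (fun t ↦ ∫ x, cauchyPdf l s x * log (t ^ 2 + (x - a) ^ 2))
      (2 * π * ∫ x, cauchyPdf l s x * cauchyPdf a b x) b := by
  have hpos : ∀ t ∈ Metric.ball b (b / 2), b / 2 < t := fun t ht ↦ by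
    rw [Metric.mem_ball, Real.dist_eq] at ht
    linarith [(abs_lt.mp ht).1]
  rw [← integral_const_mul]
  refine (hasDerivAt_integral_of_dominated_loc_of_deriv_le
    (F' := fun t x ↦ 2 * π * (cauchyPdf l s x * cauchyPdf a t x))
    (bound := fun x ↦ cauchyPdf l s x * (4 / b)) (Metric.ball_mem_nhds b (half_pos hb))
    (Eventually.of_forall fun t ↦ (by fun_prop : Measurable _).aestronglyMeasurable)
    (integrable_cauchyPdf_mul_log hs hb.ne' a) (by fun_prop) ?_
    ((integrable_cauchyPdf hs.le).mul_const _) ?_).2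
  · refine ae_of_all _ fun x t ht ↦ ?_
    have ht₀ : 0 < t := (hpos t ht).trans' (half_pos hb)
    have hp := cauchyPdf_pos hs (l := l) x
    have hq := cauchyPdf_pos ht₀ (l := a) x
    rw [Real.norm_eq_abs, abs_of_pos (by positivity)]
    calc 2 * π * (cauchyPdf l s x * cauchyPdf a t x)
        ≤ 2 * π * (cauchyPdf l s x * (π * t)⁻¹) := by
          gcongr
          exact cauchyPdf_le_inv ht₀ x
      _ = cauchyPdf l s x * (2 / t) := by field_simp
      _ ≤ cauchyPdf l s x * (4 / b) := by
          refine mul_le_mul_of_nonneg_left ?_ hp.le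
          rw [div_le_div_iff₀ ht₀ hb]
          linarith [hpos t ht]
  · refine ae_of_all _ fun x t ht ↦ ?_
    have ht₀ : 0 < t := (hpos t ht).trans' (half_pos hb)
    refine (((((hasDerivAt_id' t).fun_pow 2).add_const ((x - a) ^ 2)).log
      (by positivity)).const_mul (cauchyPdf l s x)).congr_deriv ?_
    simp only [cauchyPdf]
    field_simp
    norm_num
    ring

lemma tendsto_integral_cauchyPdf_mul_log_sub_two_log (hs : 0 < s) (a : ℝ) :
    Tendsto (fun t ↦ (∫ x, cauchyPdf l s x * log (t ^ 2 + (x - a) ^ 2)) - 2 * log t) atTop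
      (𝓝 0) := by
  have hlim := tendsto_integral_filter_of_dominated_convergence (l := atTop)
    (F := fun t x ↦ cauchyPdf l s x * (log (t ^ 2 + (x - a) ^ 2) - 2 * log t))
    (f := fun _ ↦ 0) (bound := fun x ↦ cauchyPdf l s x * log (1 ^ 2 + (x - a) ^ 2))
    (Eventually.of_forall fun t ↦ (by fun_prop : Measurable _).aestronglyMeasurable) ?_
    (integrable_cauchyPdf_mul_log hs one_ne_zero a) ?_
  · rw [integral_zero] at hlim
    refine hlim.congr' <| (eventually_gt_atTop 0).mono fun t ht ↦ ?_
    simp only [mul_sub]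
    rw [integral_sub (integrable_cauchyPdf_mul_log hs ht.ne' a)
      ((integrable_cauchyPdf hs.le).mul_const _), integral_mul_const, integral_cauchyPdf hs,
      one_mul]
  · refine (eventually_ge_atTop 1).mono fun t ht ↦ ae_of_all _ fun x ↦ ?_
    have ht₀ : 0 < t := one_pos.trans_le ht
    have hlog : log (t ^ 2 + (x - a) ^ 2) - 2 * log t = log (1 + ((x - a) / t) ^ 2) := by
      rw [← log_rpow ht₀, ← log_div (by positivity) (by positivity)]
      congr 1
      field_simp
      norm_num
    have hle : ((x - a) / t) ^ 2 ≤ (x - a) ^ 2 := by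
      rw [div_pow]
      exact div_le_self (sq_nonneg _) (one_le_pow₀ ht)
    rw [hlog, norm_mul, Real.norm_of_nonneg (cauchyPdf_pos hs x).le,
      Real.norm_of_nonneg (log_nonneg (by nlinarith)), one_pow]
    exact mul_le_mul_of_nonneg_left (log_le_log (by positivity) (by linarith))
      (cauchyPdf_pos hs x).le
  · refine ae_of_all _ fun x ↦ ?_
    simpa using (tendsto_log_add_sq_add_sq_sub_two_log le_rfl (x - a)).const_mul
      (cauchyPdf l s x)

lemma integral_cauchyPdf_mul_log {b : ℝ} (hs : 0 < s) (hb : 0 < b) (a : ℝ) :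
    ∫ x, cauchyPdf l s x * log (b ^ 2 + (x - a) ^ 2) = log ((s + b) ^ 2 + (a - l) ^ 2) := by
  let φ t := (∫ x, cauchyPdf l s x * log (t ^ 2 + (x - a) ^ 2)) - log ((s + t) ^ 2 + (a - l) ^ 2)
  have hφ : ∀ t > 0, HasDerivAt φ
      (2 * π * (∫ x, cauchyPdf l s x * cauchyPdf a t x) - 2 * π * cauchyPdf l (s + t) a) t :=
    fun t ht ↦ by
      refine (hasDerivAt_integral_cauchyPdf_mul_log hs ht a).sub ?_
      refine ((((hasDerivAt_id' t).const_add s).fun_pow 2).add_const _).log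
        (by positivity) |>.congr_deriv ?_
      simp only [cauchyPdf]
      field_simp
      norm_num
      ring
  -- `integral_cauchyPdf_mul_cauchyPdf` needs `(a, t) ≠ (l, s)`: exceptional point `t = s`
  have hφ_zero : φ b = 0 := by
    refine eq_zero_of_hasDerivAt_zero_off_countable_of_tendsto (Set.countable_singleton s)
      (fun t ht ↦ (hφ t (hb.trans_le ht)).continuousAt.continuousWithinAt) (fun t ht ↦ ?_) ?_
    · convert hφ t (hb.trans ht.1) using 1
      rw [integral_cauchyPdf_mul_cauchyPdf hs (hb.trans ht.1) fun h ↦ ht.2 (congrArg Prod.snd h),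
        sub_self]
    · simpa using (tendsto_integral_cauchyPdf_mul_log_sub_two_log hs a).sub
        (tendsto_log_add_sq_add_sq_sub_two_log hs.le (a - l))
  exact sub_eq_zero.mp hφ_zero

lemma integrable_cauchyPdf_mul_log_quadratic {α β γ : ℝ} (hs : 0 < s) (hα : 0 < α)
    (hD : 0 < α * γ - β ^ 2) :
    Integrable fun x ↦ cauchyPdf l s x * log (α * x ^ 2 - 2 * β * x + γ) := by
  have hw : √(α * γ - β ^ 2) / α ≠ 0 := by positivity
  refine (((integrable_cauchyPdf hs.le (l := l)).mul_const (log α)).add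
    (integrable_cauchyPdf_mul_log hs hw (β / α) (l := l))).congr (ae_of_all _ fun x ↦ ?_)
  simp only [Pi.add_apply, quadratic_eq_mul_sq_add_sq hα.ne' hD.le x]
  rw [log_mul hα.ne' (by positivity)]
  ring

lemma integral_cauchyPdf_mul_log_quadratic {α β γ : ℝ} (hs : 0 < s) (hα : 0 < α)
    (hD : 0 < α * γ - β ^ 2) :
    ∫ x, cauchyPdf l s x * log (α * x ^ 2 - 2 * β * x + γ) =
      log (α * (s ^ 2 + l ^ 2) - 2 * β * l + γ + 2 * s * √(α * γ - β ^ 2)) := by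
  have hw : 0 < √(α * γ - β ^ 2) / α := by positivity
  have hpt : ∀ x, cauchyPdf l s x * log (α * x ^ 2 - 2 * β * x + γ) =
      log α * cauchyPdf l s x +
        cauchyPdf l s x * log ((√(α * γ - β ^ 2) / α) ^ 2 + (x - β / α) ^ 2) := fun x ↦ by
    rw [quadratic_eq_mul_sq_add_sq hα.ne' hD.le x, log_mul hα.ne' (by positivity)]
    ring
  simp_rw [hpt]
  rw [integral_add ((integrable_cauchyPdf hs.le).const_mul _)
      (integrable_cauchyPdf_mul_log hs hw.ne' _),
    integral_const_mul, integral_cauchyPdf hs, integral_cauchyPdf_mul_log hs hw, mul_one,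
    ← log_mul hα.ne' (by positivity)]
  congr 1
  field_simp
  linear_combination sq_sqrt hD.le

end Cauchy

lemma log_cauchyPdf_mixture {l₀ l₁ s₀ s₁ c₀ c₁ : ℝ} (hs₀ : 0 < s₀) (hs₁ : 0 < s₁)
    (hc₀ : 0 < c₀) (hc₁ : 0 < c₁) (x : ℝ) :
    log (c₀ * cauchyPdf l₀ s₀ x + c₁ * cauchyPdf l₁ s₁ x) =
      log (c₀ * s₀ * (s₁ ^ 2 + (x - l₁) ^ 2) + c₁ * s₁ * (s₀ ^ 2 + (x - l₀) ^ 2))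
        - log (s₀ ^ 2 + (x - l₀) ^ 2) - log (s₁ ^ 2 + (x - l₁) ^ 2) - log π := by
  have h₀ : 0 < s₀ ^ 2 + (x - l₀) ^ 2 := by positivity
  have h₁ : 0 < s₁ ^ 2 + (x - l₁) ^ 2 := by positivity
  have hmix : c₀ * cauchyPdf l₀ s₀ x + c₁ * cauchyPdf l₁ s₁ x =
      (c₀ * s₀ * (s₁ ^ 2 + (x - l₁) ^ 2) + c₁ * s₁ * (s₀ ^ 2 + (x - l₀) ^ 2)) /
        (π * (s₀ ^ 2 + (x - l₀) ^ 2) * (s₁ ^ 2 + (x - l₁) ^ 2)) := by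
    simp only [cauchyPdf]
    field_simp
  rw [hmix, log_div (by positivity) (by positivity), log_mul (by positivity) h₁.ne',
    log_mul pi_ne_zero h₀.ne']
  ring

lemma neg_integral_cauchyPdf_mul_log_mixture {l₀ l₁ s₀ s₁ c₀ c₁ : ℝ} (hs₀ : 0 < s₀)
    (hs₁ : 0 < s₁) (hc₀ : 0 < c₀) (hc₁ : 0 < c₁) :
    -∫ x, cauchyPdf l₀ s₀ x * log (c₀ * cauchyPdf l₀ s₀ x + c₁ * cauchyPdf l₁ s₁ x) =
      log (4 * π * s₀) + log (((l₀ - l₁) ^ 2 + (s₀ + s₁) ^ 2) /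
        (c₀ * (s₀ ^ 2 + s₁ ^ 2 + (l₀ - l₁) ^ 2) + 2 * c₁ * s₀ * s₁ +
          2 * √((c₀ ^ 2 + c₁ ^ 2) * s₀ ^ 2 * s₁ ^ 2 +
            c₀ * c₁ * s₀ * s₁ * (s₀ ^ 2 + s₁ ^ 2 + (l₀ - l₁) ^ 2)))) := by
  set α := c₀ * s₀ + c₁ * s₁
  set β := c₀ * s₀ * l₁ + c₁ * s₁ * l₀
  set γ := c₀ * s₀ * (s₁ ^ 2 + l₁ ^ 2) + c₁ * s₁ * (s₀ ^ 2 + l₀ ^ 2)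
  set Δ := (c₀ ^ 2 + c₁ ^ 2) * s₀ ^ 2 * s₁ ^ 2 +
    c₀ * c₁ * s₀ * s₁ * (s₀ ^ 2 + s₁ ^ 2 + (l₀ - l₁) ^ 2)
  have hα : 0 < α := by positivity
  have hΔ : α * γ - β ^ 2 = Δ := by ring
  have hD : 0 < α * γ - β ^ 2 := hΔ ▸ by positivity
  have hpt : ∀ x, cauchyPdf l₀ s₀ x * log (c₀ * cauchyPdf l₀ s₀ x + c₁ * cauchyPdf l₁ s₁ x) =
      cauchyPdf l₀ s₀ x * log (α * x ^ 2 - 2 * β * x + γ)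
        - cauchyPdf l₀ s₀ x * log (s₀ ^ 2 + (x - l₀) ^ 2)
        - cauchyPdf l₀ s₀ x * log (s₁ ^ 2 + (x - l₁) ^ 2) - log π * cauchyPdf l₀ s₀ x := by
    intro x
    rw [log_cauchyPdf_mixture hs₀ hs₁ hc₀ hc₁, show c₀ * s₀ * (s₁ ^ 2 + (x - l₁) ^ 2) +
      c₁ * s₁ * (s₀ ^ 2 + (x - l₀) ^ 2) = α * x ^ 2 - 2 * β * x + γ by ring]
    ring
  have hN := integrable_cauchyPdf_mul_log_quadratic hs₀ hα hD (l := l₀)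
  have h₀ := integrable_cauchyPdf_mul_log hs₀ hs₀.ne' l₀ (l := l₀)
  have h₁ := integrable_cauchyPdf_mul_log hs₀ hs₁.ne' l₁ (l := l₀)
  simp_rw [hpt]
  rw [integral_sub (by exact (hN.sub h₀).sub h₁) ((integrable_cauchyPdf hs₀.le).const_mul _),
    integral_sub (by exact hN.sub h₀) h₁, integral_sub hN h₀,
    integral_cauchyPdf_mul_log_quadratic hs₀ hα hD, integral_cauchyPdf_mul_log hs₀ hs₀ l₀,
    integral_cauchyPdf_mul_log hs₀ hs₁ l₁, integral_const_mul, integral_cauchyPdf hs₀, hΔ]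
  have hX : 0 < c₀ * (s₀ ^ 2 + s₁ ^ 2 + (l₀ - l₁) ^ 2) + 2 * c₁ * s₀ * s₁ + 2 * √Δ := by
    positivity
  rw [show α * (s₀ ^ 2 + l₀ ^ 2) - 2 * β * l₀ + γ + 2 * s₀ * √Δ =
      s₀ * (c₀ * (s₀ ^ 2 + s₁ ^ 2 + (l₀ - l₁) ^ 2) + 2 * c₁ * s₀ * s₁ + 2 * √Δ) by ring,
    show (s₀ + s₀) ^ 2 + (l₀ - l₀) ^ 2 = 4 * s₀ ^ 2 by ring,
    show (s₀ + s₁) ^ 2 + (l₁ - l₀) ^ 2 = (l₀ - l₁) ^ 2 + (s₀ + s₁) ^ 2 by ring,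
    log_mul hs₀.ne' hX.ne', log_mul (by norm_num) (by positivity), log_pow,
    log_div (by positivity) hX.ne', log_mul (by positivity) hs₀.ne',
    log_mul (by norm_num) pi_ne_zero]
  push_cast
  ring

/-- Closed form of the cross-entropy between a Cauchy density and a mixture of
two Cauchy densities. -/
theorem cross_entropy_cauchy_mixture (l0 l1 s0 s1 θ : ℝ) (hs0 : 0 < s0) (hs1 : 0 < s1)
    (hθ : θ ∈ Set.Ioo (0 : ℝ) 1) :
    -∫ x : ℝ, cauchyPdf l0 s0 x *
        Real.log ((1 - θ) * cauchyPdf l0 s0 x + θ * cauchyPdf l1 s1 x) =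
      Real.log (4 * π * s0) +
        Real.log (((l0 - l1) ^ 2 + (s0 + s1) ^ 2) /
          ((1 - θ) * (s0 ^ 2 + s1 ^ 2 + (l0 - l1) ^ 2) + 2 * θ * s0 * s1 +
            2 * Real.sqrt (s0 ^ 2 * s1 ^ 2 +
              s0 * s1 * ((s0 - s1) ^ 2 + (l0 - l1) ^ 2) * θ * (1 - θ)))) := by
  rw [neg_integral_cauchyPdf_mul_log_mixture hs0 hs1 (sub_pos.2 hθ.2) hθ.1]
  congr 6
  ring
end

section
/- Let p_{0,1}(x) = 1/(π(1+x²)) and p_{1,1}(x) = 1/(π(1+(x−1)²)), and for θ ∈ (0,1) let m_θ = (1−θ)·p_{0,1} + θ·p_{1,1} and F(θ) = ∫_ℝ m_θ(x)·log m_θ(x) dx. Then for every θ ∈ (0,1), F is differentiable at θ with derivative F'(θ) = log( (2·√(1+θ−θ²)+θ+2) / (2·√(1+θ−θ²)−θ+3) ). -/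
/-!
Writing `β = √(1 + θ - θ²)`, the mixture factors as
`m_θ(x) = ((x - (1 - θ))² + β²) / (π (1 + x²) (1 + (x - 1)²))`, so `log m_θ` is a sum of terms
`log ((x - a)² + b²)`. Their integrals against a Cauchy density are given by the Poisson-type
formula `∫ p_{l,1}(x) log ((x - a)² + b²) dx = log ((a - l)² + (1 + b)²)`, proved by
differentiating in `b` (the derivative is an integral of a product of two Cauchy kernels, computed
by partial fractions) and letting `b → ∞`, where both sides are `log b² + o(1)`. This gives the
closed form `F(θ) = (1 - θ) log (3 - θ + 2β) + θ log (2 + θ + 2β) - log (20π)`, and in its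
derivative the terms without logarithms cancel because `β² = 1 + θ - θ²`.
-/

open MeasureTheory Real Filter Topology Set Bornology ProbabilityTheory

theorem tendsto_log_sub_log_cobounded (a₁ c₁ a₂ c₂ : ℝ) :
    Tendsto (fun x => log ((x - a₁) ^ 2 + c₁) - log ((x - a₂) ^ 2 + c₂))
      (cobounded ℝ) (𝓝 0) := by
  set r : ℝ → ℝ := fun t => ((1 - a₁ * t) ^ 2 + c₁ * t ^ 2) / ((1 - a₂ * t) ^ 2 + c₂ * t ^ 2)
  have hr : Tendsto r (𝓝 0) (𝓝 1) := by
    have : ContinuousAt r 0 := ContinuousAt.div (by fun_prop) (by fun_prop) (by simp)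
    simpa [r] using this.tendsto
  have hlog := ((continuousAt_log one_ne_zero).tendsto.comp hr).comp tendsto_inv₀_cobounded
  rw [log_one] at hlog
  refine hlog.congr' ?_
  have hq : ∀ a c : ℝ, ∀ᶠ x in cobounded ℝ, (x - a) ^ 2 + c ≠ 0 := fun a c => by
    filter_upwards [tendsto_norm_cobounded_atTop.eventually_gt_atTop (|a| + |c| + 1)] with x hx
    rw [norm_eq_abs] at hx
    have : |x| - |a| ≤ |x - a| := abs_sub_abs_le_abs_sub x a
    nlinarith [sq_abs (x - a), neg_abs_le c, abs_nonneg c]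
  filter_upwards [hq a₁ c₁, hq a₂ c₂, hq 0 0] with x h₁ h₂ h₀
  have hx : x ≠ 0 := by simpa using h₀
  simp only [Function.comp, r]
  rw [← log_div h₁ h₂]
  congr 1
  field_simp

theorem integrable_inv_one_add_sq_mul_log (a : ℝ) {c : ℝ} (hc : 0 < c) :
    Integrable fun x : ℝ => (1 + x ^ 2)⁻¹ * log ((x - a) ^ 2 + c) := by
  set K : ℝ := 2 + 2 * a ^ 2 + c
  have hrpow : Integrable fun x : ℝ => (1 + x ^ 2) ^ (-(3 / 4 : ℝ)) := by
    have := integrable_rpow_neg_one_add_norm_sq (E := ℝ) (μ := volume) (r := 3 / 2) (by norm_num)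
    convert this using 2 with x
    rw [norm_eq_abs, sq_abs]
    norm_num
  refine Integrable.mono' ((integrable_inv_one_add_sq.const_mul |log c|).add
      (hrpow.const_mul (4 * K ^ (1 / 4 : ℝ)))) (by fun_prop) (ae_of_all _ fun x => ?_)
  set t := (x - a) ^ 2 + c
  have hu : 0 < 1 + x ^ 2 := by positivity
  have hct : c ≤ t := le_add_of_nonneg_left (sq_nonneg _)
  have htK : t ≤ K * (1 + x ^ 2) := by
    simp only [t, K]
    nlinarith [sq_nonneg (x + a), mul_nonneg (sq_nonneg a) (sq_nonneg x),
      mul_nonneg hc.le (sq_nonneg x)]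
  have hlog : |log t| ≤ |log c| + 4 * (K ^ (1 / 4 : ℝ) * (1 + x ^ 2) ^ (1 / 4 : ℝ)) := by
    have hlow : log c ≤ log t := log_le_log hc hct
    have hup : log t ≤ 4 * t ^ (1 / 4 : ℝ) := by
      have := log_le_rpow_div (hc.le.trans hct) (by norm_num : (0 : ℝ) < 1 / 4)
      linarith
    have hmono : t ^ (1 / 4 : ℝ) ≤ K ^ (1 / 4 : ℝ) * (1 + x ^ 2) ^ (1 / 4 : ℝ) := by
      rw [← mul_rpow (by positivity) hu.le]
      exact rpow_le_rpow (hc.le.trans hct) htK (by norm_num)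
    rw [abs_le]
    constructor <;> linarith [neg_abs_le (log c), le_abs_self (log c),
      rpow_nonneg (hc.le.trans hct) (1 / 4 : ℝ)]
  have hsplit : (1 + x ^ 2) ^ (-(3 / 4 : ℝ)) = (1 + x ^ 2)⁻¹ * (1 + x ^ 2) ^ (1 / 4 : ℝ) := by
    rw [← rpow_neg_one, ← rpow_add hu]
    norm_num
  rw [norm_mul, norm_inv, norm_eq_abs, norm_eq_abs, abs_of_pos hu, Pi.add_apply, hsplit]
  calc (1 + x ^ 2)⁻¹ * |log t|
      ≤ (1 + x ^ 2)⁻¹ * (|log c| + 4 * (K ^ (1 / 4 : ℝ) * (1 + x ^ 2) ^ (1 / 4 : ℝ))) :=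
        mul_le_mul_of_nonneg_left hlog (by positivity)
    _ = _ := by ring

theorem integrable_inv_one_add_sq_mul_inv (a : ℝ) {c : ℝ} (hc : 0 < c) :
    Integrable fun x : ℝ => (1 + x ^ 2)⁻¹ * ((x - a) ^ 2 + c)⁻¹ := by
  refine (integrable_inv_one_add_sq.mul_const c⁻¹).mono' (by fun_prop) (ae_of_all _ fun x => ?_)
  rw [norm_mul, norm_inv, norm_inv, norm_eq_abs, norm_eq_abs, abs_of_pos (by positivity),
    abs_of_pos (by positivity)]
  gcongr
  exact le_add_of_nonneg_left (sq_nonneg _)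

theorem integral_eq_of_hasDerivAt_add_arctan {f u : ℝ → ℝ} {a b B K : ℝ} (hb : 0 < b)
    (hG : ∀ x, HasDerivAt (fun x => u x + B * arctan x + K * arctan ((x - a) / b)) (f x) x)
    (hf : Integrable f) (hu : Tendsto u (cobounded ℝ) (𝓝 0)) :
    ∫ x, f x = (B + K) * π := by
  have lim : ∀ {l : Filter ℝ} {c : ℝ}, l ≤ cobounded ℝ → Tendsto arctan l (𝓝 c) →
      Tendsto (fun x => (x - a) / b) l l →
      Tendsto (fun x => u x + B * arctan x + K * arctan ((x - a) / b)) l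
        (𝓝 (0 + B * c + K * c)) := fun hl hc hab =>
    ((hu.mono_left hl).add (hc.const_mul B)).add ((hc.comp hab).const_mul K)
  rw [integral_of_hasDerivAt_of_tendsto hG hf
    (lim IsOrderBornology.atBot_le_cobounded (tendsto_arctan_atBot.mono_right nhdsWithin_le_nhds)
      ((tendsto_atBot_add_const_right _ (-a) tendsto_id).atBot_div_const hb))
    (lim IsOrderBornology.atTop_le_cobounded (tendsto_arctan_atTop.mono_right nhdsWithin_le_nhds)
      ((tendsto_atTop_add_const_right _ (-a) tendsto_id).atTop_div_const hb))]
  ring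

theorem integral_inv_one_add_sq_sq : ∫ x : ℝ, ((1 + x ^ 2) ^ 2)⁻¹ = π / 2 := by
  have hu : Tendsto (fun x : ℝ => x / (2 * (1 + x ^ 2))) (cobounded ℝ) (𝓝 0) := by
    have : ContinuousAt (fun t : ℝ => t / (2 * (t ^ 2 + 1))) 0 :=
      ContinuousAt.div (by fun_prop) (by fun_prop) (by norm_num)
    have h := this.tendsto.comp tendsto_inv₀_cobounded
    rw [zero_div] at h
    refine h.congr' ?_
    filter_upwards [eventually_ne_cobounded 0] with x hx
    simp only [Function.comp]
    field_simp
  have hint : Integrable fun x : ℝ => ((1 + x ^ 2) ^ 2)⁻¹ :=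
    (integrable_inv_one_add_sq_mul_inv 0 one_pos).congr (ae_of_all _ fun x => by
      simp only [sub_zero, add_comm _ (1 : ℝ), ← sq, inv_pow])
  rw [integral_eq_of_hasDerivAt_add_arctan (a := 0) (B := 1 / 2) (K := 0) one_pos (fun x => ?_)
    hint hu]
  · ring
  have hz : HasDerivAt (fun y : ℝ => 0 * arctan ((y - 0) / 1)) 0 x := by
    simpa using hasDerivAt_const x (0 : ℝ)
  refine (((hasDerivAt_id' x).div (((hasDerivAt_pow 2 x).const_add 1).const_mul 2)
    (by positivity)).add ((hasDerivAt_arctan x).const_mul (1 / 2))).add hz |>.congr_deriv ?_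
  field_simp
  ring

-- Partial fractions; the decomposition degenerates exactly when `a + b i = i`.
theorem integral_inv_one_add_sq_mul_inv_of_ne (a : ℝ) {b : ℝ} (hb : 0 < b)
    (hΔ : (a ^ 2 + b ^ 2 - 1) ^ 2 + 4 * a ^ 2 ≠ 0) :
    ∫ x : ℝ, (1 + x ^ 2)⁻¹ * ((x - a) ^ 2 + b ^ 2)⁻¹ =
      π * (1 + b) / (b * (a ^ 2 + (1 + b) ^ 2)) := by
  set Δ := (a ^ 2 + b ^ 2 - 1) ^ 2 + 4 * a ^ 2
  set A := 2 * a / Δ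
  set B := (a ^ 2 + b ^ 2 - 1) / Δ
  set K := ((1 + 3 * a ^ 2 - b ^ 2) / Δ - A * a) / b
  have hu : Tendsto (fun x => A / 2 * (log ((x - 0) ^ 2 + 1) - log ((x - a) ^ 2 + b ^ 2)))
      (cobounded ℝ) (𝓝 0) := by
    simpa using (tendsto_log_sub_log_cobounded 0 1 a (b ^ 2)).const_mul (A / 2)
  rw [integral_eq_of_hasDerivAt_add_arctan (a := a) (B := B) (K := K) hb (fun x => ?_)
    (integrable_inv_one_add_sq_mul_inv a (pow_pos hb 2)) hu]
  · simp only [B, K, A]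
    field_simp
    ring
  have hq : ∀ c d : ℝ, HasDerivAt (fun y => (y - c) ^ 2 + d) (2 * (x - c)) x := fun c d => by
    simpa using (((hasDerivAt_id' x).sub_const c).pow 2).add_const d
  have hx₀ : (x - 0) ^ 2 + 1 ≠ 0 := by positivity
  have hx₁ : (x - a) ^ 2 + b ^ 2 ≠ 0 := by positivity
  refine ((((hq 0 1).log hx₀).sub ((hq a (b ^ 2)).log hx₁)).const_mul (A / 2)
    |>.add ((hasDerivAt_arctan x).const_mul B)
    |>.add ((((hasDerivAt_id' x).sub_const a).div_const b).arctan.const_mul K)).congr_deriv ?_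
  rw [show 1 + ((x - a) / b) ^ 2 = ((x - a) ^ 2 + b ^ 2) / b ^ 2 by field_simp; ring]
  simp only [B, K, A]
  field_simp
  ring

theorem integral_inv_one_add_sq_mul_inv (a : ℝ) {b : ℝ} (hb : 0 < b) :
    ∫ x : ℝ, (1 + x ^ 2)⁻¹ * ((x - a) ^ 2 + b ^ 2)⁻¹ =
      π * (1 + b) / (b * (a ^ 2 + (1 + b) ^ 2)) := by
  rcases eq_or_ne ((a ^ 2 + b ^ 2 - 1) ^ 2 + 4 * a ^ 2) 0 with hΔ | hΔ
  · obtain rfl : a = 0 := by nlinarith [sq_nonneg (a ^ 2 + b ^ 2 - 1), sq_nonneg a]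
    obtain rfl : b = 1 := by
      have : b ^ 2 - 1 = 0 := by simpa using hΔ
      nlinarith
    simp_rw [show ∀ x : ℝ, (1 + x ^ 2)⁻¹ * ((x - 0) ^ 2 + 1 ^ 2)⁻¹ = ((1 + x ^ 2) ^ 2)⁻¹ by
      intro x; rw [sub_zero, one_pow, add_comm _ 1, ← mul_inv, ← sq], integral_inv_one_add_sq_sq]
    ring
  · exact integral_inv_one_add_sq_mul_inv_of_ne a hb hΔ

theorem hasDerivAt_integral_inv_one_add_sq_mul_log (a : ℝ) {s : ℝ} (hs : 0 < s) :
    HasDerivAt (fun t => ∫ x : ℝ, (1 + x ^ 2)⁻¹ * log ((x - a) ^ 2 + t ^ 2))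
      (2 * π * (1 + s) / (a ^ 2 + (1 + s) ^ 2)) s := by
  have hpos : ∀ {t} x, 0 < t → 0 < (x - a) ^ 2 + t ^ 2 := fun x ht => by positivity
  have h := hasDerivAt_integral_of_dominated_loc_of_deriv_le (x₀ := s)
    (F := fun t x => (1 + x ^ 2)⁻¹ * log ((x - a) ^ 2 + t ^ 2))
    (F' := fun t x => (1 + x ^ 2)⁻¹ * (2 * t / ((x - a) ^ 2 + t ^ 2)))
    (bound := fun x => (1 + x ^ 2)⁻¹ * (4 / s)) (Ioi_mem_nhds (half_lt_self hs))
    (.of_forall fun t => by fun_prop) (integrable_inv_one_add_sq_mul_log a (pow_pos hs 2))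
    (by fun_prop) (ae_of_all _ fun x t (ht : s / 2 < t) => ?_)
    (integrable_inv_one_add_sq.mul_const _) (ae_of_all _ fun x t (ht : s / 2 < t) => ?_)
  · refine h.2.congr_deriv ?_
    calc ∫ x, (1 + x ^ 2)⁻¹ * (2 * s / ((x - a) ^ 2 + s ^ 2))
        = 2 * s * ∫ x, (1 + x ^ 2)⁻¹ * ((x - a) ^ 2 + s ^ 2)⁻¹ := by
          rw [← integral_const_mul]
          congr 1 with x
          ring
      _ = _ := by
          rw [integral_inv_one_add_sq_mul_inv a hs]
          field_simp
  · have ht₀ : 0 < t := by linarith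
    rw [norm_mul, norm_inv, norm_eq_abs, norm_eq_abs, abs_of_pos (by positivity),
      abs_of_pos (by positivity)]
    refine mul_le_mul_of_nonneg_left ?_ (by positivity)
    rw [div_le_div_iff₀ (hpos x ht₀) hs]
    nlinarith [sq_nonneg (x - a)]
  · have ht₀ : 0 < t := by linarith
    exact (((hasDerivAt_pow 2 t).const_add _).log (hpos x ht₀).ne').const_mul _ |>.congr_deriv
      (by simp)

theorem abs_log_sq_add_sq_sub_log_le (a x : ℝ) {s : ℝ} (hs : 1 ≤ s) :
    |log ((x - a) ^ 2 + s ^ 2) - log (a ^ 2 + (1 + s) ^ 2)| ≤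
      log ((x - a) ^ 2 + 1) + log (a ^ 2 + 4) := by
  have hs2 : 0 < s ^ 2 := by positivity
  have hx : 0 < (x - a) ^ 2 + 1 := by positivity
  have ha : 0 < a ^ 2 + 4 := by positivity
  have hup : log ((x - a) ^ 2 + s ^ 2) ≤ log ((x - a) ^ 2 + 1) + log (s ^ 2) := by
    rw [← log_mul hx.ne' hs2.ne']
    exact log_le_log (by positivity)
      (by nlinarith [mul_nonneg (sq_nonneg (x - a)) (by nlinarith : (0 : ℝ) ≤ s ^ 2 - 1)])
  have hdown : log (a ^ 2 + (1 + s) ^ 2) ≤ log (a ^ 2 + 4) + log (s ^ 2) := by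
    rw [← log_mul ha.ne' hs2.ne']
    exact log_le_log (by positivity) (by nlinarith [sq_nonneg a, sq_nonneg (s - 1)])
  have h₁ : log (s ^ 2) ≤ log ((x - a) ^ 2 + s ^ 2) :=
    log_le_log hs2 (le_add_of_nonneg_left (sq_nonneg _))
  have h₂ : log (s ^ 2) ≤ log (a ^ 2 + (1 + s) ^ 2) := log_le_log hs2 (by nlinarith)
  have h₃ : 0 ≤ log ((x - a) ^ 2 + 1) := log_nonneg (by nlinarith [sq_nonneg (x - a)])
  have h₄ : 0 ≤ log (a ^ 2 + 4) := log_nonneg (by nlinarith [sq_nonneg a])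
  rw [abs_le]
  constructor <;> linarith

theorem tendsto_integral_inv_one_add_sq_mul_log_sub (a : ℝ) :
    Tendsto (fun s => (∫ x : ℝ, (1 + x ^ 2)⁻¹ * log ((x - a) ^ 2 + s ^ 2)) -
      π * log (a ^ 2 + (1 + s) ^ 2)) atTop (𝓝 0) := by
  have hdct : Tendsto (fun s => ∫ x : ℝ,
      (1 + x ^ 2)⁻¹ * (log ((x - a) ^ 2 + s ^ 2) - log (a ^ 2 + (1 + s) ^ 2))) atTop (𝓝 0) := by
    have h := tendsto_integral_filter_of_dominated_convergence
      (F := fun s x => (1 + x ^ 2)⁻¹ * (log ((x - a) ^ 2 + s ^ 2) - log (a ^ 2 + (1 + s) ^ 2)))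
      (bound := fun x => (1 + x ^ 2)⁻¹ * (log ((x - a) ^ 2 + 1) + log (a ^ 2 + 4)))
      (μ := volume) (l := atTop) (f := fun _ => 0)
      (.of_forall fun s => (by fun_prop : Measurable _).aestronglyMeasurable) ?_ ?_ ?_
    · simpa using h
    · filter_upwards [eventually_ge_atTop 1] with s hs
      refine ae_of_all _ fun x => ?_
      rw [norm_mul, norm_inv, norm_eq_abs, norm_eq_abs, abs_of_pos (by positivity)]
      exact mul_le_mul_of_nonneg_left (abs_log_sq_add_sq_sub_log_le a x hs) (by positivity)
    · simp_rw [mul_add]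
      exact (integrable_inv_one_add_sq_mul_log a one_pos).add
        (integrable_inv_one_add_sq.mul_const _)
    · refine ae_of_all _ fun x => ?_
      have h := (tendsto_log_sub_log_cobounded 0 ((x - a) ^ 2) (-1) (a ^ 2)).mono_left
        IsOrderBornology.atTop_le_cobounded
      convert h.const_mul (1 + x ^ 2)⁻¹ using 1
      · ext s
        ring_nf
      · simp
  refine hdct.congr' ?_
  filter_upwards [eventually_gt_atTop 0] with s hs
  rw [← integral_univ_inv_one_add_sq, ← integral_mul_const, ← integral_sub
    (integrable_inv_one_add_sq_mul_log a (pow_pos hs 2))]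
  · simp_rw [mul_sub]
  · exact integrable_inv_one_add_sq.mul_const _

theorem integral_inv_one_add_sq_mul_log (a : ℝ) {b : ℝ} (hb : 0 < b) :
    ∫ x : ℝ, (1 + x ^ 2)⁻¹ * log ((x - a) ^ 2 + b ^ 2) = π * log (a ^ 2 + (1 + b) ^ 2) := by
  set ψ := fun s => (∫ x : ℝ, (1 + x ^ 2)⁻¹ * log ((x - a) ^ 2 + s ^ 2)) -
    π * log (a ^ 2 + (1 + s) ^ 2)
  have hψ' : ∀ s ∈ Ioi (0 : ℝ), HasDerivAt ψ 0 s := fun s (hs : 0 < s) => by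
    have hlog := (((hasDerivAt_id' s).const_add 1).pow 2).const_add (a ^ 2) |>.log
      (by positivity : a ^ 2 + (1 + s) ^ 2 ≠ 0)
    refine (hasDerivAt_integral_inv_one_add_sq_mul_log a hs).sub (hlog.const_mul π)
      |>.congr_deriv ?_
    simp only [Nat.cast_ofNat, Nat.add_one_sub_one, pow_one, mul_one, Pi.pow_apply]
    ring
  have hψ : ∀ s ∈ Ioi (0 : ℝ), ψ s = ψ b := fun s hs =>
    isOpen_Ioi.is_const_of_deriv_eq_zero isPreconnected_Ioi
      (fun t ht => (hψ' t ht).differentiableAt.differentiableWithinAt)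
      (fun t ht => (hψ' t ht).deriv) hs hb
  have hlim : Tendsto ψ atTop (𝓝 (ψ b)) :=
    tendsto_const_nhds.congr' <| (eventually_gt_atTop 0).mono fun s hs => (hψ s hs).symm
  exact sub_eq_zero.mp
    (tendsto_nhds_unique hlim (tendsto_integral_inv_one_add_sq_mul_log_sub a))

theorem cauchyPDFReal_one (l x : ℝ) : cauchyPDFReal l 1 x = π⁻¹ * (1 + (x - l) ^ 2)⁻¹ := by
  simp [cauchyPDFReal_def, add_comm]

theorem integrable_cauchyPDFReal_mul_log (l a : ℝ) {c : ℝ} (hc : 0 < c) :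
    Integrable fun x => cauchyPDFReal l 1 x * log ((x - a) ^ 2 + c) := by
  refine (((integrable_inv_one_add_sq_mul_log (a - l) hc).comp_sub_right l).const_mul π⁻¹).congr
    (ae_of_all _ fun x => ?_)
  simp only [cauchyPDFReal_one, sub_sub_sub_cancel_right, mul_assoc]

theorem integral_cauchyPDFReal_mul_log (l a : ℝ) {c : ℝ} (hc : 0 < c) :
    ∫ x, cauchyPDFReal l 1 x * log ((x - a) ^ 2 + c) = log ((a - l) ^ 2 + (1 + √c) ^ 2) := by
  rw [← integral_add_right_eq_self _ l]
  simp only [cauchyPDFReal_one, add_sub_cancel_right, mul_assoc, integral_const_mul]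
  have := integral_inv_one_add_sq_mul_log (a - l) (sqrt_pos.mpr hc)
  rw [sq_sqrt hc.le] at this
  simp_rw [show ∀ x, x + l - a = x - (a - l) by intro x; ring, this]
  field_simp [pi_ne_zero]

noncomputable def cauchyMixture (θ x : ℝ) : ℝ :=
  (1 - θ) * cauchyPDFReal 0 1 x + θ * cauchyPDFReal 1 1 x

theorem log_cauchyMixture {θ : ℝ} (hθ : 0 < 1 + θ - θ ^ 2) (x : ℝ) :
    log (cauchyMixture θ x) = log ((x - (1 - θ)) ^ 2 + (1 + θ - θ ^ 2)) -
      log ((x - 0) ^ 2 + 1) - log ((x - 1) ^ 2 + 1) - log π := by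
  have hx₀ : (x - 0) ^ 2 + 1 ≠ 0 := by positivity
  have hx₁ : (x - 1) ^ 2 + 1 ≠ 0 := by positivity
  have hm : cauchyMixture θ x =
      ((x - (1 - θ)) ^ 2 + (1 + θ - θ ^ 2)) / (((x - 0) ^ 2 + 1) * ((x - 1) ^ 2 + 1)) / π := by
    simp only [cauchyMixture, cauchyPDFReal_one]
    field_simp
    ring
  rw [hm, log_div (by positivity) pi_ne_zero, log_div (by positivity) (mul_ne_zero hx₀ hx₁),
    log_mul hx₀ hx₁]
  ring

theorem integrable_cauchyPDFReal_mul_log_cauchyMixture (l : ℝ) {θ : ℝ}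
    (hθ : 0 < 1 + θ - θ ^ 2) :
    Integrable fun x => cauchyPDFReal l 1 x * log (cauchyMixture θ x) := by
  simp_rw [log_cauchyMixture hθ, mul_sub]
  exact (((integrable_cauchyPDFReal_mul_log l _ hθ).sub
    (integrable_cauchyPDFReal_mul_log l 0 one_pos)).sub
    (integrable_cauchyPDFReal_mul_log l 1 one_pos)).sub
    ((integrable_cauchyPDFReal l).mul_const _)

theorem integral_cauchyPDFReal_mul_log_cauchyMixture (l : ℝ) {θ : ℝ} (hθ : 0 < 1 + θ - θ ^ 2) :
    ∫ x, cauchyPDFReal l 1 x * log (cauchyMixture θ x) =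
      log ((1 - θ - l) ^ 2 + (1 + √(1 + θ - θ ^ 2)) ^ 2) - log (l ^ 2 + 4) -
        log ((1 - l) ^ 2 + 4) - log π := by
  have hm := integrable_cauchyPDFReal_mul_log l (1 - θ) hθ
  have h₀ := integrable_cauchyPDFReal_mul_log l 0 one_pos
  simp_rw [log_cauchyMixture hθ, mul_sub]
  rw [integral_sub ?_ ((integrable_cauchyPDFReal l).mul_const _), integral_sub ?_
    (integrable_cauchyPDFReal_mul_log l 1 one_pos), integral_sub hm h₀,
    integral_cauchyPDFReal_mul_log l _ hθ, integral_cauchyPDFReal_mul_log l _ one_pos,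
    integral_cauchyPDFReal_mul_log l _ one_pos, integral_mul_const,
    integral_cauchyPDFReal_eq_one l one_ne_zero]
  · norm_num
  · exact hm.sub h₀
  · exact (hm.sub h₀).sub (integrable_cauchyPDFReal_mul_log l 1 one_pos)

noncomputable def cauchyMixtureNegentropy (θ : ℝ) : ℝ :=
  ∫ x, cauchyMixture θ x * log (cauchyMixture θ x)

theorem cauchyMixtureNegentropy_eq {θ : ℝ} (hθ : 0 < 1 + θ - θ ^ 2) :
    cauchyMixtureNegentropy θ =
      (1 - θ) * log (3 - θ + 2 * √(1 + θ - θ ^ 2)) +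
        θ * log (2 + θ + 2 * √(1 + θ - θ ^ 2)) - log (20 * π) := by
  have hb := sq_sqrt hθ.le
  have hsplit : ∀ x, cauchyMixture θ x * log (cauchyMixture θ x) =
      (1 - θ) * (cauchyPDFReal 0 1 x * log (cauchyMixture θ x)) +
        θ * (cauchyPDFReal 1 1 x * log (cauchyMixture θ x)) := fun x => by
    simp only [cauchyMixture]
    ring
  simp_rw [cauchyMixtureNegentropy, hsplit]
  rw [integral_add ((integrable_cauchyPDFReal_mul_log_cauchyMixture 0 hθ).const_mul _)
    ((integrable_cauchyPDFReal_mul_log_cauchyMixture 1 hθ).const_mul _), integral_const_mul,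
    integral_const_mul, integral_cauchyPDFReal_mul_log_cauchyMixture 0 hθ,
    integral_cauchyPDFReal_mul_log_cauchyMixture 1 hθ,
    show (1 - θ - 0) ^ 2 + (1 + √(1 + θ - θ ^ 2)) ^ 2 = 3 - θ + 2 * √(1 + θ - θ ^ 2) by
      linear_combination hb,
    show (1 - θ - 1) ^ 2 + (1 + √(1 + θ - θ ^ 2)) ^ 2 = 2 + θ + 2 * √(1 + θ - θ ^ 2) by
      linear_combination hb,
    show (20 : ℝ) * π = 4 * 5 * π by norm_num, log_mul (by norm_num) pi_ne_zero,
    log_mul (by norm_num) (by norm_num)]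
  norm_num
  ring

theorem hasDerivAt_cauchyMixtureNegentropy {θ : ℝ} (hθ : 0 < 1 + θ - θ ^ 2) :
    HasDerivAt cauchyMixtureNegentropy
      (log ((2 * √(1 + θ - θ ^ 2) + θ + 2) / (2 * √(1 + θ - θ ^ 2) - θ + 3))) θ := by
  have hnhds : ∀ᶠ t in 𝓝 θ, 0 < 1 + t - t ^ 2 :=
    (isOpen_lt continuous_const (by fun_prop)).mem_nhds hθ
  refine HasDerivAt.congr_of_eventuallyEq ?_ (hnhds.mono fun t ht => cauchyMixtureNegentropy_eq ht)
  set b := √(1 + θ - θ ^ 2)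
  have hb : 0 < b := sqrt_pos.mpr hθ
  have hb2 : b ^ 2 = 1 + θ - θ ^ 2 := sq_sqrt hθ.le
  have hU : 0 < 3 - θ + 2 * b := by nlinarith
  have hV : 0 < 2 + θ + 2 * b := by nlinarith
  have hsqrt : HasDerivAt (fun t => √(1 + t - t ^ 2)) ((1 - 2 * θ) / (2 * b)) θ :=
    (((hasDerivAt_id' θ).const_add 1).sub (hasDerivAt_pow 2 θ)).sqrt hθ.ne' |>.congr_deriv
      (by simp only [Nat.cast_ofNat, Nat.add_one_sub_one, pow_one, Pi.sub_apply]; ring)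
  have hlogU := (((hasDerivAt_id' θ).const_sub 3).add (hsqrt.const_mul 2)).log hU.ne'
  have hlogV := (((hasDerivAt_id' θ).const_add 2).add (hsqrt.const_mul 2)).log hV.ne'
  refine ((((hasDerivAt_id' θ).const_sub 1).mul hlogU).add ((hasDerivAt_id' θ).mul hlogV))
    |>.sub_const _ |>.congr_deriv ?_
  simp only [Pi.add_apply]
  rw [show 2 * b + θ + 2 = 2 + θ + 2 * b by ring, show 2 * b - θ + 3 = 3 - θ + 2 * b by ring,
    log_div hV.ne' hU.ne']
  have hcancel : (1 - θ) * ((-1 + 2 * ((1 - 2 * θ) / (2 * b))) / (3 - θ + 2 * b)) +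
      θ * ((1 + 2 * ((1 - 2 * θ) / (2 * b))) / (2 + θ + 2 * b)) = 0 := by
    field_simp
    linear_combination (4 * θ - 2) * hb2
  linear_combination hcancel

/-- The negentropy `F(θ)` of the mixture of `p_{0,1}` and `p_{1,1}` is differentiable
on `(0,1)` with derivative `F'(θ) = log((2√(1+θ−θ²)+θ+2)/(2√(1+θ−θ²)−θ+3))`. -/
theorem negentropy_hasDerivAt (F : ℝ → ℝ)
    (hF : F = fun θ : ℝ =>
      ∫ x : ℝ, ((1 - θ) * (1 / (π * (1 + x ^ 2))) + θ * (1 / (π * (1 + (x - 1) ^ 2)))) *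
        Real.log ((1 - θ) * (1 / (π * (1 + x ^ 2))) +
          θ * (1 / (π * (1 + (x - 1) ^ 2)))))
    (θ : ℝ) (hθ : θ ∈ Set.Ioo (0 : ℝ) 1) :
    HasDerivAt F
      (Real.log ((2 * Real.sqrt (1 + θ - θ ^ 2) + θ + 2) /
        (2 * Real.sqrt (1 + θ - θ ^ 2) - θ + 3))) θ := by
  have hF' : F = cauchyMixtureNegentropy := by
    subst hF
    funext t
    simp only [cauchyMixtureNegentropy, cauchyMixture, cauchyPDFReal_one, one_div, mul_inv,
      sub_zero]
  rw [hF']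
  exact hasDerivAt_cauchyMixtureNegentropy (by nlinarith [hθ.1, hθ.2])
end
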